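/- For a sequence (g₀,g₁,g₂,...) ∈ {0,1}^∞ and n ≥ 0, the linear game ∅^{g₀g₁...gₙ} (a chain of singletons with activeness gᵢ at depth n−i) is canonical if and only if n ≤ 1, or n ≥ 2 and g₀g₁g₂ ∈ {001, 011, 100, 101, 110}. -/

import Mathlib

inductive AGame : Type where
  | mk : List AGame → Bool → AGame

namespace AGame

noncomputable instance : DecidableEq AGame := Classical.decEq _

def opts : AGame → List AGame | mk gs _ => gs
def act : AGame → Bool | mk _ g => g

theorem sizeOf_lt_of_mem {G G' : AGame} (h : G' ∈ G.opts) : sizeOf G' < sizeOf G := by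
  cases G with
  | mk gs g =>
    simp only [opts] at h
    have := List.sizeOf_lt_of_mem h
    simp [AGame.mk.sizeOf_spec]
    omega

/-- Disjunctive sum of games with activeness. -/
def add (G H : AGame) : AGame :=
  mk (G.opts.attach.map (fun x => add x.1 H) ++
      H.opts.attach.map (fun y => add G y.1)) (G.act || H.act)
termination_by sizeOf G + sizeOf H
decreasing_by
  · have := sizeOf_lt_of_mem x.2; omega
  · have := sizeOf_lt_of_mem y.2; omega

/-- `PPos G` means the outcome of `G` is 𝒫 (second player wins). -/
def PPos (G : AGame) : Prop :=
  G.act = false ∨ ∀ G' ∈ G.opts.attach, ¬ PPos G'.1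
termination_by sizeOf G
decreasing_by
  have := sizeOf_lt_of_mem G'.2; omega

/-- Hereditary set-equality (the paper's ≅). -/
def Identical (G H : AGame) : Prop :=
  G.act = H.act ∧ (∀ G' ∈ G.opts.attach, ∃ H' ∈ H.opts.attach, Identical G'.1 H'.1)
              ∧ (∀ H' ∈ H.opts.attach, ∃ G' ∈ G.opts.attach, Identical G'.1 H'.1)
termination_by sizeOf G + sizeOf H
decreasing_by
  · have := sizeOf_lt_of_mem G'.2; have := sizeOf_lt_of_mem H'.2; omega
  · have := sizeOf_lt_of_mem G'.2; have := sizeOf_lt_of_mem H'.2; omega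

/-- Equivalence of games with activeness: same outcome in every sum. -/
def Equiv (G H : AGame) : Prop := ∀ X : AGame, (PPos (add G X) ↔ PPos (add H X))

end AGame

namespace AGame

/-- Nimbers with activeness: `star γ n ≅ {star γ j : j < n}^{γ n}`. -/
def star (γ : ℕ → Bool) : ℕ → AGame
  | n => mk ((List.range n).attach.map (fun j => star γ j.1)) (γ n)
termination_by n => n
decreasing_by
  have := j.2; simp [List.mem_range] at this; omega

/-- The generalized Grundy set `𝒢^γ(G)`. -/
def GSet (γ : ℕ → Bool) (G : AGame) : Set ℕ := {n | PPos (add G (star γ n))}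

/-- Minimum excludant of a set of naturals. -/
noncomputable def mex (S : Set ℕ) : ℕ := sInf {n | n ∉ S}

/-- Ordinary Grundy value, computed ignoring activeness. -/
noncomputable def grundy (G : AGame) : ℕ :=
  mex {m | ∃ G' ∈ G.opts.attach, grundy G'.1 = m}
termination_by sizeOf G
decreasing_by
  have := sizeOf_lt_of_mem G'.2; omega

/-- The three types of games with activeness. -/
inductive AType : Type where
  | inactive : AType            -- type 0
  | activeSomeInactive : AType  -- type 1_{∃0}
  | activeAllActive : AType     -- type 1_{∀1}

open Classical in
/-- `type(G^g)`. -/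
noncomputable def typ (G : AGame) : AType :=
  if G.act = false then .inactive
  else if ∃ G' ∈ G.opts, G'.act = false then .activeSomeInactive
  else .activeAllActive

/-- Formal birthday `b(G)`. -/
def bday (G : AGame) : ℕ :=
  (G.opts.attach.map (fun G' => bday G'.1 + 1)).foldr max 0
termination_by sizeOf G
decreasing_by
  have := sizeOf_lt_of_mem G'.2; omega

/-- An option `G'` of `G` is reversible if it has an option equivalent to `G`. -/
def Reversible (G G' : AGame) : Prop := ∃ G'' ∈ G'.opts, Equiv G'' G

/-- A canonical game: all options canonical and no option reversible. -/
def Canonical (G : AGame) : Prop :=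
  (∀ G' ∈ G.opts.attach, Canonical G'.1) ∧ (∀ G' ∈ G.opts, ¬ Reversible G G')
termination_by sizeOf G
decreasing_by
  have := sizeOf_lt_of_mem G'.2; omega

/-- A transitive game: all options transitive and options of options are options. -/
def TransGame (G : AGame) : Prop :=
  (∀ G' ∈ G.opts.attach, TransGame G'.1) ∧ (∀ G' ∈ G.opts, ∀ G'' ∈ G'.opts, G'' ∈ G.opts)
termination_by sizeOf G
decreasing_by
  have := sizeOf_lt_of_mem G'.2; omega

/-- `G` is covered by `H` if every option of `G` is equivalent to some option of `H`. -/
def Covered (G H : AGame) : Prop := ∀ G' ∈ G.opts, ∃ H' ∈ H.opts, Equiv G' H'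

/-- The relation `G ⋈ H`. -/
def Bowtie (G H : AGame) : Prop :=
  (∀ G' ∈ G.opts, ¬ Equiv G' H) ∧ (∀ H' ∈ H.opts, ¬ Equiv G H')

/-- The linear chain `∅^{g₀ g₁ … gₙ}`. -/
def chain (g : ℕ → Bool) : ℕ → AGame
  | 0 => mk [] (g 0)
  | n + 1 => mk [chain g n] (g (n + 1))

end AGame

/-! The only option of `∅^{g₀…gₖ₊₂}` has the single option `∅^{g₀…gₖ}`, so `∅^{g₀…gₙ}` is canonical
iff `∅^{g₀…gₖ} ≢ ∅^{g₀…gₖ₊₂}` for all `k + 2 ≤ n`. For the prefixes `000`, `010`, `111` already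
`∅^{g₀} ≡ ∅^{g₀g₁g₂}`, by induction on the other summand. For the five remaining prefixes some
active `Y` has `∅^{g₀} + Y ∈ 𝒩` and `∅^{g₀g₁g₂} + Y ∈ 𝒫`. Write `Yᵢ` for `Y` wrapped in `i`
active singletons. The outcomes of `∅^{g₀…gₖ} + Yᵢ` obey the recurrence of a two-pile take-one
game, and its boundary values then force `∅^{g₀…gₖ} + Yₖ₊₁ ∈ 𝒫` but `∅^{g₀…gₖ₊₂} + Yₖ₊₁ ∈ 𝒩`. -/

section Grid

variable {t : ℕ → ℕ → Prop}

theorem grid_above_diag (ht : ∀ k i, t (k + 1) (i + 1) ↔ ¬ t k (i + 1) ∧ ¬ t (k + 1) i)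
    (h01 : t 0 1) (h02 : ¬ t 0 2) (k : ℕ) : t k (k + 1) ∧ ¬ t k (k + 2) := by
  induction k with
  | zero => exact ⟨h01, h02⟩
  | succ k ih =>
    have hdiag : ¬ t (k + 1) (k + 1) := fun h => ((ht k k).1 h).1 ih.1
    have hnext : t (k + 1) (k + 2) := (ht k (k + 1)).2 ⟨ih.2, hdiag⟩
    exact ⟨hnext, fun h => ((ht k (k + 2)).1 h).2 hnext⟩

theorem grid_below_diag (ht : ∀ k i, t (k + 1) (i + 1) ↔ ¬ t k (i + 1) ∧ ¬ t (k + 1) i)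
    (h20 : t 2 0) (h30 : ¬ t 3 0) (j : ℕ) : t (j + 2) j ∧ ¬ t (j + 3) j := by
  induction j with
  | zero => exact ⟨h20, h30⟩
  | succ j ih =>
    have hnext : t (j + 3) (j + 1) :=
      (ht (j + 2) j).2 ⟨fun h => ((ht (j + 1) j).1 h).2 ih.1, ih.2⟩
    exact ⟨hnext, fun h => ((ht (j + 3) j).1 h).1 hnext⟩

theorem grid_separates (ht : ∀ k i, t (k + 1) (i + 1) ↔ ¬ t k (i + 1) ∧ ¬ t (k + 1) i)
    (h01 : t 0 1) (h02 : ¬ t 0 2) (h20 : t 2 0) (h30 : ¬ t 3 0) (k : ℕ) :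
    t k (k + 1) ∧ ¬ t (k + 2) (k + 1) :=
  ⟨(grid_above_diag ht h01 h02 k).1,
    fun h => ((ht (k + 1) k).1 h).2 (grid_below_diag ht h20 h30 k).1⟩

end Grid

namespace AGame

@[simp] theorem opts_mk (l : List AGame) (a : Bool) : (mk l a).opts = l := rfl
@[simp] theorem act_mk (l : List AGame) (a : Bool) : (mk l a).act = a := rfl

theorem ppos_iff (G : AGame) : PPos G ↔ G.act = false ∨ ∀ G' ∈ G.opts, ¬ PPos G' := by
  rw [PPos]
  simp only [List.mem_attach, true_implies, Subtype.forall]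

theorem ppos_add_iff (G H : AGame) :
    PPos (add G H) ↔ (G.act || H.act) = false ∨
      (∀ G' ∈ G.opts, ¬ PPos (add G' H)) ∧ ∀ H' ∈ H.opts, ¬ PPos (add G H') := by
  rw [ppos_iff, add]
  simp [or_imp, forall_and]

theorem ppos_add_mk_mk (l m : List AGame) (a b : Bool) :
    PPos (add (mk l a) (mk m b)) ↔ (a || b) = false ∨
      (∀ G' ∈ l, ¬ PPos (add G' (mk m b))) ∧ ∀ H' ∈ m, ¬ PPos (add (mk l a) H') :=
  ppos_add_iff _ _

theorem ppos_add_iff_of_act {G H : AGame} (h : (G.act || H.act) = true) :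
    PPos (add G H) ↔ (∀ G' ∈ G.opts, ¬ PPos (add G' H)) ∧ ∀ H' ∈ H.opts, ¬ PPos (add G H') := by
  rw [ppos_add_iff, h]
  simp

theorem not_ppos_add_of_mem_opts {G G' X : AGame} (hG' : G' ∈ G.opts)
    (h : (G.act || X.act) = true) (hG : PPos (add G X)) : ¬ PPos (add G' X) :=
  ((ppos_add_iff_of_act h).1 hG).1 G' hG'

theorem canonical_iff (G : AGame) :
    Canonical G ↔ (∀ G' ∈ G.opts, Canonical G') ∧ ∀ G' ∈ G.opts, ¬ Reversible G G' := by
  rw [Canonical]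
  simp only [List.mem_attach, true_implies, Subtype.forall]

section Chain

variable (g : ℕ → Bool)

@[simp] theorem opts_chain_zero : (chain g 0).opts = [] := rfl
@[simp] theorem opts_chain_succ (n : ℕ) : (chain g (n + 1)).opts = [chain g n] := rfl
@[simp] theorem act_chain (n : ℕ) : (chain g n).act = g n := by cases n <;> rfl

theorem chain_zero : chain g 0 = mk [] (g 0) := rfl

theorem chain_two : chain g 2 = mk [mk [mk [] (g 0)] (g 1)] (g 2) := rfl

theorem canonical_chain_iff (n : ℕ) :
    Canonical (chain g n) ↔ ∀ k, k + 2 ≤ n → ¬ Equiv (chain g k) (chain g (k + 2)) := by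
  induction n with
  | zero => rw [canonical_iff]; simp
  | succ n ih =>
    have hrev : ¬ Reversible (chain g (n + 1)) (chain g n) ↔
        ∀ k, k + 2 = n + 1 → ¬ Equiv (chain g k) (chain g (k + 2)) := by
      cases n <;> simp [Reversible]
    rw [canonical_iff, opts_chain_succ, List.forall_mem_singleton, List.forall_mem_singleton, ih,
      hrev]
    exact ⟨fun h k hk => (Nat.lt_or_eq_of_le hk).elim (fun hlt => h.1 k (by omega)) (h.2 k),
      fun h => ⟨fun k hk => h k (by omega), fun k hk => h k hk.le⟩⟩

theorem ppos_add_chain_succ_iterate_succ (Y : AGame) (k i : ℕ) :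
    PPos (add (chain g (k + 1)) ((mk [·] true)^[i + 1] Y)) ↔
      ¬ PPos (add (chain g k) ((mk [·] true)^[i + 1] Y)) ∧
        ¬ PPos (add (chain g (k + 1)) ((mk [·] true)^[i] Y)) := by
  rw [Function.iterate_succ_apply', ppos_add_iff_of_act (by simp)]
  simp

theorem ppos_add_chain_zero_iterate_succ (Y : AGame) (i : ℕ) :
    PPos (add (chain g 0) ((mk [·] true)^[i + 1] Y)) ↔
      ¬ PPos (add (chain g 0) ((mk [·] true)^[i] Y)) := by
  rw [Function.iterate_succ_apply', ppos_add_iff_of_act (by simp)]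
  simp

end Chain

end AGame



namespace AGame

variable {g : ℕ → Bool}

theorem ppos_add_chain_zero_iff_chain_two (h20 : g 2 = g 0) (h : g 0 = false ∨ g 1 = true)
    (X : AGame) : PPos (add (chain g 0) X) ↔ PPos (add (chain g 2) X) := by
  cases hact : (g 0 || X.act)
  · rw [ppos_add_iff, ppos_add_iff, act_chain, act_chain, h20, hact]
    simp
  have IH : ∀ X' ∈ X.opts, (PPos (add (chain g 0) X') ↔ PPos (add (chain g 2) X')) :=
    fun X' hX' => ppos_add_chain_zero_iff_chain_two h20 h X'
  have hact₁ : (g 1 || X.act) = true := by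
    rcases h with h | h <;> simp_all
  have hmove : (∀ X' ∈ X.opts, ¬ PPos (add (chain g 0) X')) → ¬ PPos (add (chain g 1) X) := by
    intro hall h₁
    refine not_ppos_add_of_mem_opts (List.mem_singleton_self _) (by rwa [act_chain]) h₁ ?_
    rw [ppos_add_iff_of_act (by rwa [act_chain]), opts_chain_zero]
    exact ⟨by simp, hall⟩
  rw [ppos_add_iff_of_act (by rwa [act_chain]), ppos_add_iff_of_act (by rwa [act_chain, h20]),
    opts_chain_zero, opts_chain_succ, List.forall_mem_singleton]
  exact ⟨fun ⟨_, hall⟩ => ⟨hmove hall, fun X' hX' => (IH X' hX').not.1 (hall X' hX')⟩,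
    fun ⟨_, hall⟩ => ⟨by simp, fun X' hX' => (IH X' hX').not.2 (hall X' hX')⟩⟩
termination_by sizeOf X
decreasing_by exact sizeOf_lt_of_mem hX'

theorem equiv_chain_zero_two (h20 : g 2 = g 0) (h : g 0 = false ∨ g 1 = true) :
    Equiv (chain g 0) (chain g 2) :=
  ppos_add_chain_zero_iff_chain_two h20 h

theorem not_equiv_chain_add_two {Y : AGame} (hY : Y.act = true)
    (h0 : ¬ PPos (add (chain g 0) Y)) (h2 : PPos (add (chain g 2) Y)) (k : ℕ) :
    ¬ Equiv (chain g k) (chain g (k + 2)) := by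
  let t k i := PPos (add (chain g k) ((mk [·] true)^[i] Y))
  have h01 : t 0 1 := (ppos_add_chain_zero_iterate_succ g Y 0).2 h0
  obtain ⟨hlow, hhigh⟩ := grid_separates (ppos_add_chain_succ_iterate_succ g Y) h01
    (fun h => (ppos_add_chain_zero_iterate_succ g Y 1).1 h h01) h2
    (fun h => not_ppos_add_of_mem_opts (List.mem_singleton_self _) (by simp [hY]) h h2) k
  exact fun he => hhigh ((he _).1 hlow)

theorem exists_distinguishing (h : ¬ (g 2 = g 0 ∧ (g 0 = false ∨ g 1 = true))) :
    ∃ Y : AGame, Y.act = true ∧ ¬ PPos (add (chain g 0) Y) ∧ PPos (add (chain g 2) Y) := by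
  rw [chain_zero, chain_two]
  generalize g 0 = a, g 1 = b, g 2 = c at h ⊢
  cases a <;> cases b <;> cases c <;> simp at h
  -- the prefixes `001`, `011`, `100`, `101`, `110`, in this order
  exacts [⟨mk [mk [] false] true, rfl, by simp [ppos_add_mk_mk]⟩,
    ⟨mk [mk [mk [] false] false, mk [mk [] true] true] true, rfl, by simp [ppos_add_mk_mk]⟩,
    ⟨mk [mk [mk [mk [] false] false] true, mk [mk [] true] true] true, rfl,
      by simp [ppos_add_mk_mk]⟩,
    ⟨mk [mk [] false] true, rfl, by simp [ppos_add_mk_mk]⟩,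
    ⟨mk [mk [mk [mk [] false] false] true, mk [mk [] true] true] true, rfl,
      by simp [ppos_add_mk_mk]⟩]

theorem good_prefix_iff (a b c : Bool) :
    ((a = false ∧ b = false ∧ c = true) ∨ (a = false ∧ b = true ∧ c = true) ∨
      (a = true ∧ b = false ∧ c = false) ∨ (a = true ∧ b = false ∧ c = true) ∨
      (a = true ∧ b = true ∧ c = false)) ↔ ¬ (c = a ∧ (a = false ∨ b = true)) := by
  revert a b c; decide

end AGame

/-- Canonicity of the linear chains `∅^{g₀g₁…gₙ}`. -/
theorem AGame.chain_canonical (g : ℕ → Bool) (n : ℕ) :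
    AGame.Canonical (AGame.chain g n) ↔
      (n ≤ 1 ∨ (2 ≤ n ∧
        ((g 0 = false ∧ g 1 = false ∧ g 2 = true) ∨
         (g 0 = false ∧ g 1 = true ∧ g 2 = true) ∨
         (g 0 = true ∧ g 1 = false ∧ g 2 = false) ∨
         (g 0 = true ∧ g 1 = false ∧ g 2 = true) ∨
         (g 0 = true ∧ g 1 = true ∧ g 2 = false)))) := by
  rw [AGame.good_prefix_iff, AGame.canonical_chain_iff]
  rcases Nat.lt_or_ge n 2 with hn | hn
  · exact iff_of_true (fun k hk => by omega) (Or.inl (by omega))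
  by_cases hbad : g 2 = g 0 ∧ (g 0 = false ∨ g 1 = true)
  · exact iff_of_false (fun h => h 0 hn (AGame.equiv_chain_zero_two hbad.1 hbad.2))
      (fun h => h.elim (by omega) (fun h => h.2 hbad))
  · obtain ⟨Y, hY, h0, h2⟩ := AGame.exists_distinguishing hbad
    exact iff_of_true (fun k _ => AGame.not_equiv_chain_add_two hY h0 h2 k) (Or.inr ⟨hn, hbad⟩)
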